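/- Let d ≥ 2 be an integer and let n_Z be a d×d real symmetric positive semidefinite matrix with 0 < rank(n_Z) < d; set n := (0, 0, n_Z) ∈ E and F_s := {(x, 0, Z) ∈ E : x ≤ 0, Z positive semidefinite, tr(Z·n_Z) = 0}. For integers k ≥ 1 define w^k := (−1, 1/k, 0) ∈ E (last component the zero matrix). Then ⟨w^k, n⟩ = 0, dist(w^k, F_s) = 1/k, 0 < dist(w^k, K_logdet) ≤ √d/(k·e^{k/d}), and liminf_{k→∞} dist(w^k, F_s)/g_log(dist(w^k, K_logdet)) ≥ 1/(2d). (Hence the residual function g_log in the log-type error bound for F_s with n_y = 0 is tight.) -/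

import Mathlib

open Matrix Filter

noncomputable section

/-- The space `E = ℝ × ℝ × S^d` (matrix parts are required to be symmetric where relevant). -/
abbrev E (d : ℕ) : Type := ℝ × ℝ × Matrix (Fin d) (Fin d) ℝ

/-- The inner product `⟨(x,y,Z),(x',y',Z')⟩ = x x' + y y' + tr (Z Z')` on `E`. -/
def ip {d : ℕ} (p q : E d) : ℝ := p.1 * q.1 + p.2.1 * q.2.1 + (p.2.2 * q.2.2).trace

/-- The induced norm `‖(x,y,Z)‖ = sqrt (x² + y² + tr (Z²))` on `E`. -/
def nrm {d : ℕ} (p : E d) : ℝ := Real.sqrt (p.1 ^ 2 + p.2.1 ^ 2 + (p.2.2 * p.2.2).trace)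

/-- Distance from a point to a set: `dist(p, S) = inf {‖p - s‖ : s ∈ S}`. -/
def sdist {d : ℕ} (p : E d) (S : Set (E d)) : ℝ := sInf {r : ℝ | ∃ s ∈ S, r = nrm (p - s)}

/-- The log-determinant cone `K_logdet`. -/
def Klogdet (d : ℕ) : Set (E d) :=
  {p | (0 < p.2.1 ∧ p.2.2.PosDef ∧ p.1 ≤ p.2.1 * Real.log ((p.2.1⁻¹ • p.2.2).det))
    ∨ (p.1 ≤ 0 ∧ p.2.1 = 0 ∧ p.2.2.PosSemidef)}

/-- The log-type residual function `g_log`. -/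
def glog (t : ℝ) : ℝ :=
  if t = 0 then 0
  else if t ≤ Real.exp (-2) then -1 / Real.log t
  else 1 / 4 + Real.exp 2 / 4 * t

/-- The face `F_s = ℝ₋ × {0} × (S₊ᵈ ∩ {n_Z}^⊥)`. -/
def Fs (d : ℕ) (nZ : Matrix (Fin d) (Fin d) ℝ) : Set (E d) :=
  {p | p.1 ≤ 0 ∧ p.2.1 = 0 ∧ p.2.2.PosSemidef ∧ (p.2.2 * nZ).trace = 0}

/-- The sequence `w^k = (-1, 1/k, 0)`. -/
def wtight (d : ℕ) (k : ℕ) : E d := (-1, 1 / (k : ℝ), (0 : Matrix (Fin d) (Fin d) ℝ))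

/-!
Every point of `F_s` has `y = 0`, so `w^k` is at distance exactly `1/k` from `F_s`.

The point `(-1, 1/k, c I)` with `c = e^{-k/d}/k` satisfies `-1 = (1/k) log det (k c I)`, so it
lies in `K_logdet` and `dist(w^k, K_logdet) ≤ c √d`. Conversely, a point `(x, y, Z)` of the cone
within `ε = e^{-2k}/(2kd)` of `w^k` has `y ≥ 1/(2k)` and `tr Z ≤ d ε ≤ e^{-2k} y`; as
`det Z ≤ (tr Z)^d`, the defining inequality of the cone forces `x ≤ y d log e^{-2k} ≤ -d`,
which is far from `-1`. Hence for `k ≥ 2d` the distance `t` to the cone lies in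
`[ε, e^{-k/d}] ⊆ (0, e^{-2}]`, where `g_log t = 1/(-log t)`, and the ratio equals `-log t / k`,
which lies in `[1/d, 2 + 2d]`.
-/

namespace Matrix

variable {n : Type*} [Fintype n]

lemma trace_mul_self_eq_sum_sq {Z : Matrix n n ℝ} (hZ : Z.IsHermitian) :
    (Z * Z).trace = ∑ i, ∑ j, Z i j ^ 2 := by
  simp only [trace, diag, mul_apply, sq]
  refine Finset.sum_congr rfl fun i _ => Finset.sum_congr rfl fun j _ => ?_
  rw [← hZ.apply i j, star_trivial]

lemma trace_mul_self_nonneg {Z : Matrix n n ℝ} (hZ : Z.IsHermitian) : 0 ≤ (Z * Z).trace := by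
  rw [trace_mul_self_eq_sum_sq hZ]
  positivity

lemma trace_sq_le_card_mul_trace_mul_self {Z : Matrix n n ℝ} (hZ : Z.IsHermitian) :
    Z.trace ^ 2 ≤ Fintype.card n * (Z * Z).trace := by
  rw [trace_mul_self_eq_sum_sq hZ]
  calc Z.trace ^ 2 ≤ Fintype.card n * ∑ i, Z i i ^ 2 := sq_sum_le_card_mul_sum_sq
    _ ≤ Fintype.card n * ∑ i, ∑ j, Z i j ^ 2 := by
      gcongr with i
      exact Finset.single_le_sum (f := fun j => Z i j ^ 2) (fun j _ => sq_nonneg _)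
        (Finset.mem_univ i)

lemma PosDef.det_le_trace_pow [DecidableEq n] {Z : Matrix n n ℝ} (hZ : Z.PosDef) :
    Z.det ≤ Z.trace ^ Fintype.card n := by
  have hpos := hZ.eigenvalues_pos
  rw [hZ.1.det_eq_prod_eigenvalues, hZ.1.trace_eq_sum_eigenvalues, ← Finset.card_univ,
    ← Finset.prod_const]
  simp only [RCLike.ofReal_real_eq_id, id]
  exact Finset.prod_le_prod (fun i _ => (hpos i).le) fun i _ =>
    Finset.single_le_sum (fun j _ => (hpos j).le) (Finset.mem_univ i)

end Matrix

section

variable {d : ℕ}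

lemma nrm_sq {x y : ℝ} {Z : Matrix (Fin d) (Fin d) ℝ} (hZ : Z.IsHermitian) :
    nrm ((x, y, Z) : E d) ^ 2 = x ^ 2 + y ^ 2 + (Z * Z).trace :=
  Real.sq_sqrt (by have := trace_mul_self_nonneg hZ; positivity)

lemma wtight_sub (k : ℕ) (x y : ℝ) (Z : Matrix (Fin d) (Fin d) ℝ) :
    wtight d k - (x, y, Z) = (-1 - x, 1 / k - y, -Z) := by
  simp [wtight]

lemma sdist_le_nrm_sub {p s : E d} {S : Set (E d)} (hs : s ∈ S) : sdist p S ≤ nrm (p - s) :=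
  csInf_le ⟨0, by rintro r ⟨t, -, rfl⟩; exact Real.sqrt_nonneg _⟩ ⟨s, hs, rfl⟩

lemma le_sdist {p : E d} {S : Set (E d)} {c : ℝ} (hS : S.Nonempty)
    (h : ∀ s ∈ S, c ≤ nrm (p - s)) : c ≤ sdist p S := by
  obtain ⟨s, hs⟩ := hS
  exact le_csInf ⟨_, s, hs, rfl⟩ fun r ⟨t, ht, hr⟩ => hr ▸ h t ht

lemma zero_mem_Klogdet : (0 : E d) ∈ Klogdet d :=
  Or.inr ⟨le_rfl, rfl, PosSemidef.zero⟩

lemma isHermitian_of_mem_Klogdet {p : E d} (hp : p ∈ Klogdet d) : p.2.2.IsHermitian := by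
  rcases hp with ⟨-, hZ, -⟩ | ⟨-, -, hZ⟩
  exacts [hZ.1, hZ.1]

lemma smul_one_mem_Klogdet {x y c : ℝ} (hy : 0 < y) (hc : 0 < c)
    (hx : x ≤ y * d * Real.log (c / y)) : ((x, y, c • 1) : E d) ∈ Klogdet d := by
  refine Or.inl ⟨hy, ?_, ?_⟩
  · simpa [smul_one_eq_diagonal] using PosDef.diagonal (n := Fin d) fun _ => hc
  · dsimp only
    rw [smul_smul, det_smul, det_one, mul_one, Fintype.card_fin, Real.log_pow, inv_mul_eq_div]
    linarith

lemma fst_le_of_mem_Klogdet (hd : 0 < d) {p : E d} (hp : p ∈ Klogdet d) (hy : 0 < p.2.1) {b : ℝ}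
    (hb : p.2.2.trace ≤ b * p.2.1) : p.1 ≤ p.2.1 * d * Real.log b := by
  obtain ⟨x, y, Z⟩ := p
  rcases hp with ⟨-, hZ, hx⟩ | ⟨-, hy0, -⟩
  swap
  · exact absurd hy0 hy.ne'
  dsimp only at hy hb hx ⊢
  have : Nonempty (Fin d) := Fin.pos_iff_nonempty.1 hd
  have hdet : 0 < (y⁻¹ • Z).det := (hZ.smul (inv_pos.2 hy)).det_pos
  have htr : 0 < (y⁻¹ • Z).trace := (hZ.smul (inv_pos.2 hy)).trace_pos
  have hb' : (y⁻¹ • Z).trace ≤ b := by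
    rw [trace_smul, smul_eq_mul, inv_mul_le_iff₀ hy]; linarith
  calc x ≤ y * Real.log (y⁻¹ • Z).det := hx
    _ ≤ y * Real.log ((y⁻¹ • Z).trace ^ d) := by
      gcongr
      simpa using (hZ.smul (inv_pos.2 hy)).det_le_trace_pow
    _ ≤ y * d * Real.log b := by
      rw [Real.log_pow, mul_assoc]
      gcongr

lemma glog_of_le {t : ℝ} (h0 : 0 < t) (h : t ≤ Real.exp (-2)) : glog t = (-Real.log t)⁻¹ := by
  rw [glog, if_neg h0.ne', if_pos h, neg_div, one_div, inv_neg]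

lemma sdist_wtight_Fs (nZ : Matrix (Fin d) (Fin d) ℝ) (k : ℕ) :
    sdist (wtight d k) (Fs d nZ) = 1 / k := by
  have hk : (0 : ℝ) ≤ 1 / k := by positivity
  have hmem : ((-1, 0, 0) : E d) ∈ Fs d nZ := ⟨by norm_num, rfl, PosSemidef.zero, by simp⟩
  apply le_antisymm
  · refine (sdist_le_nrm_sub hmem).trans_eq ?_
    simp [nrm, wtight]
  · refine le_sdist ⟨_, hmem⟩ fun ⟨x, y, Z⟩ ⟨_, hy, hZ, _⟩ => ?_
    dsimp only at hy hZ
    rw [wtight_sub, hy, sub_zero]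
    refine (abs_of_nonneg hk).ge.trans (Real.abs_le_sqrt ?_)
    nlinarith [trace_mul_self_nonneg hZ.1.neg]

lemma sdist_wtight_Klogdet_le (hd : 0 < d) {k : ℕ} (hk : 0 < k) :
    sdist (wtight d k) (Klogdet d) ≤ √d / (k * Real.exp (k / d)) := by
  set c := Real.exp (-(k / d)) / k with hc
  have hmem : ((-1, 1 / k, c • 1) : E d) ∈ Klogdet d := by
    refine smul_one_mem_Klogdet (by positivity) (by positivity) (le_of_eq ?_)
    rw [hc, div_div_div_cancel_right₀ (by positivity), div_one, Real.log_exp]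
    field_simp
  refine (sdist_le_nrm_sub hmem).trans_eq ?_
  have hsub : wtight d k - ((-1, 1 / k, c • 1) : E d) = ((0, 0, -(c • 1)) : E d) := by
    simp [wtight]
  rw [hsub, nrm]
  simp only [neg_mul_neg, smul_mul_smul, mul_one, trace_smul, trace_one, Fintype.card_fin]
  rw [show (0 : ℝ) ^ 2 + 0 ^ 2 + (c * c) • (d : ℝ) = c ^ 2 * d by simp [sq],
    Real.sqrt_mul (sq_nonneg c), Real.sqrt_sq (by positivity), hc, Real.exp_neg]
  field_simp

lemma exp_div_le_sdist_wtight_Klogdet (hd : 2 ≤ d) {k : ℕ} (hk : 0 < k) :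
    Real.exp (-(2 * k)) / (2 * k * d) ≤ sdist (wtight d k) (Klogdet d) := by
  set ε := Real.exp (-(2 * k)) / (2 * k * d) with hε
  have hk' : (0 : ℝ) < k := by exact_mod_cast hk
  have hd' : (2 : ℝ) ≤ d := by exact_mod_cast hd
  have hε0 : 0 < ε := by positivity
  have hεk : ε ≤ 1 / (2 * k) := by
    rw [hε, div_le_div_iff₀ (by positivity) (by positivity)]
    nlinarith [Real.exp_le_one_iff.2 (by linarith : -(2 * (k : ℝ)) ≤ 0)]
  refine le_sdist ⟨0, zero_mem_Klogdet⟩ fun ⟨x, y, Z⟩ hs => ?_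
  have hZ : Z.IsHermitian := isHermitian_of_mem_Klogdet hs
  by_contra! hlt
  have hsum : (-1 - x) ^ 2 + (1 / k - y) ^ 2 + (Z * Z).trace < ε ^ 2 := by
    have := nrm_sq (x := -1 - x) (y := 1 / k - y) hZ.neg
    rw [neg_mul_neg, ← wtight_sub] at this
    rw [← this]
    exact pow_lt_pow_left₀ hlt (Real.sqrt_nonneg _) two_ne_zero
  have htrZZ := trace_mul_self_nonneg hZ
  have hx : -1 - x < ε := (abs_lt.1 (abs_lt_of_sq_lt_sq (by nlinarith) hε0.le)).2
  have hy : 1 / k - y < ε := (abs_lt.1 (abs_lt_of_sq_lt_sq (by nlinarith) hε0.le)).2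
  have htr : Z.trace ≤ d * ε := by
    refine abs_le_of_sq_le_sq' ?_ (by positivity) |>.2
    have hZZ : (Z * Z).trace < ε ^ 2 := by nlinarith [sq_nonneg (-1 - x), sq_nonneg (1 / k - y)]
    calc Z.trace ^ 2 ≤ d * (Z * Z).trace := by
          simpa using trace_sq_le_card_mul_trace_mul_self hZ
      _ ≤ d * ε ^ 2 := by gcongr
      _ ≤ (d * ε) ^ 2 := by nlinarith [sq_nonneg ε]
  have hy2k : 1 / (2 * k) ≤ y := by
    have : 1 / (k : ℝ) = 2 * (1 / (2 * k)) := by field_simp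
    linarith
  have hypos : 0 < y := lt_of_lt_of_le (by positivity) hy2k
  have hb : Z.trace ≤ Real.exp (-(2 * k)) * y := by
    calc Z.trace ≤ d * ε := htr
      _ = Real.exp (-(2 * k)) * (1 / (2 * k)) := by rw [hε]; field_simp
      _ ≤ Real.exp (-(2 * k)) * y := by gcongr
  have hxd : x ≤ -d := by
    have := fst_le_of_mem_Klogdet (by omega) hs hypos hb
    rw [Real.log_exp] at this
    have h1 : 1 / (2 * (k : ℝ)) * (2 * k * d) = d := by field_simp
    nlinarith [mul_le_mul_of_nonneg_right hy2k (by positivity : (0 : ℝ) ≤ 2 * k * d)]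
  have hε2 : ε ≤ 1 / 2 := hεk.trans (by gcongr; linarith [(by exact_mod_cast hk : (1 : ℝ) ≤ k)])
  linarith

lemma sdist_wtight_Klogdet_le_exp (hd : 0 < d) {k : ℕ} (hk : d ≤ k) :
    sdist (wtight d k) (Klogdet d) ≤ Real.exp (-(k / d)) := by
  have hk' : (0 : ℝ) < k := by exact_mod_cast hd.trans_le hk
  have hd1 : (1 : ℝ) ≤ d := by exact_mod_cast hd
  have hsqrt : √(d : ℝ) ≤ k :=
    (Real.sqrt_le_self_iff.2 (Or.inr hd1)).trans (by exact_mod_cast hk)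
  refine (sdist_wtight_Klogdet_le hd (hd.trans_le hk)).trans ?_
  rw [Real.exp_neg, div_mul_eq_div_div, div_eq_mul_inv]
  exact mul_le_of_le_one_left (by positivity) ((div_le_one hk').2 hsqrt)

lemma sdist_wtight_div_glog_mem_Icc (nZ : Matrix (Fin d) (Fin d) ℝ) (hd : 2 ≤ d) {k : ℕ}
    (hk : 2 * d ≤ k) :
    sdist (wtight d k) (Fs d nZ) / glog (sdist (wtight d k) (Klogdet d)) ∈
      Set.Icc (1 / (d : ℝ)) (2 + 2 * d) := by
  set t := sdist (wtight d k) (Klogdet d)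
  have hk0 : 0 < k := by omega
  have hd' : (2 : ℝ) ≤ d := by exact_mod_cast hd
  have hkd : (2 : ℝ) ≤ k / d := by
    rw [le_div_iff₀ (by positivity)]; exact_mod_cast (by omega : 2 * d ≤ k)
  have hlow := exp_div_le_sdist_wtight_Klogdet hd hk0
  have hup := sdist_wtight_Klogdet_le_exp (by omega) (by omega : d ≤ k)
  have ht : 0 < t := lt_of_lt_of_le (by positivity) hlow
  rw [sdist_wtight_Fs, glog_of_le ht (hup.trans (Real.exp_le_exp.2 (by linarith))), div_inv_eq_mul]
  constructor
  · have : Real.log t ≤ -(k / d) := (Real.log_le_log ht hup).trans_eq (Real.log_exp _)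
    calc 1 / (d : ℝ) = 1 / k * (k / d) := by field_simp
      _ ≤ 1 / k * -Real.log t := by gcongr; linarith
  · have hlog : -Real.log t ≤ 2 * k + 2 * k * d := by
      have := Real.log_le_log (by positivity) hlow
      rw [Real.log_div (by positivity) (by positivity), Real.log_exp] at this
      have := Real.log_le_sub_one_of_pos (by positivity : (0 : ℝ) < 2 * k * d)
      linarith
    calc 1 / k * -Real.log t ≤ 1 / k * (2 * k + 2 * k * d) := by gcongr
      _ = 2 + 2 * d := by field_simp

end

theorem stmt_15_general (d : ℕ) (hd : 2 ≤ d)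
    (nZ : Matrix (Fin d) (Fin d) ℝ) :
    (∀ k : ℕ, 1 ≤ k →
      ip (wtight d k) ((0, 0, nZ) : E d) = 0 ∧
      sdist (wtight d k) (Fs d nZ) = 1 / k ∧
      0 < sdist (wtight d k) (Klogdet d) ∧
      sdist (wtight d k) (Klogdet d) ≤ Real.sqrt d / (k * Real.exp (k / d))) ∧
    1 / (2 * (d : ℝ)) ≤ liminf
      (fun k : ℕ => sdist (wtight d k) (Fs d nZ) / glog (sdist (wtight d k) (Klogdet d)))
      atTop := by
  refine ⟨fun k hk => ⟨by simp [ip, wtight], sdist_wtight_Fs nZ k,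
    lt_of_lt_of_le (by positivity) (exp_div_le_sdist_wtight_Klogdet hd hk),
    sdist_wtight_Klogdet_le (by omega) hk⟩, ?_⟩
  have hratio : ∀ᶠ k : ℕ in atTop,
      sdist (wtight d k) (Fs d nZ) / glog (sdist (wtight d k) (Klogdet d)) ∈
        Set.Icc (1 / (d : ℝ)) (2 + 2 * d) :=
    eventually_atTop.2 ⟨2 * d, fun k hk => sdist_wtight_div_glog_mem_Icc nZ hd hk⟩
  have hd' : (0 : ℝ) < d := by exact_mod_cast (by omega : 0 < d)
  refine le_liminf_of_le (isCoboundedUnder_ge_of_eventually_le atTop (hratio.mono fun _ h => h.2))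
    (hratio.mono fun _ h => le_trans ?_ h.1)
  gcongr
  linarith

/-- Remark 3.3 (tightness of the log-type error bound for `F_s`, `n_y = 0`): along
`w^k = (-1, 1/k, 0)` one has `⟨w^k, n⟩ = 0`, `dist(w^k, F_s) = 1/k`,
`0 < dist(w^k, K_logdet) ≤ √d/(k e^{k/d})`, and
`liminf_k dist(w^k, F_s) / g_log(dist(w^k, K_logdet)) ≥ 1/(2d)`. -/
theorem stmt_15 (d : ℕ) (hd : 2 ≤ d)
    (nZ : Matrix (Fin d) (Fin d) ℝ) (hnZ : nZ.PosSemidef)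
    (hrank_pos : 0 < nZ.rank) (hrank_lt : nZ.rank < d) :
    (∀ k : ℕ, 1 ≤ k →
      ip (wtight d k) ((0, 0, nZ) : E d) = 0 ∧
      sdist (wtight d k) (Fs d nZ) = 1 / k ∧
      0 < sdist (wtight d k) (Klogdet d) ∧
      sdist (wtight d k) (Klogdet d) ≤ Real.sqrt d / (k * Real.exp (k / d))) ∧
    1 / (2 * (d : ℝ)) ≤ liminf
      (fun k : ℕ => sdist (wtight d k) (Fs d nZ) / glog (sdist (wtight d k) (Klogdet d)))
      atTop :=
  stmt_15_general d hd nZ
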